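/- Let R be a finite commutative ring and S ⊆ U(R) with S⁻¹ ⊆ S. If the nonorientable genus of Γ(R, S) equals 1, then |U(R)| ≤ 6 and |J(R)| ≤ 3. -/

import Mathlib

namespace CrosscapDef

open SimpleGraph

variable {V : Type*}

/-- An embedding scheme (rotation system together with an edge signature) for a simple
graph `G`: `rot` cyclically permutes the darts around each vertex (a single cycle at every
vertex), and `sgn d = true` means the edge of `d` is orientation-reversing. -/
structure Scheme {V : Type*} (G : SimpleGraph V) where
  rot : Equiv.Perm G.Dart
  rot_fst : ∀ d : G.Dart, (rot d).toProd.1 = d.toProd.1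
  rot_single : ∀ d e : G.Dart, d.toProd.1 = e.toProd.1 → rot.SameCycle d e
  sgn : G.Dart → Bool
  sgn_symm : ∀ d : G.Dart, sgn d.symm = sgn d

/-- Crossing an edge: reverse the dart and flip the local orientation according to the
signature. -/
def Scheme.flip {G : SimpleGraph V} (σ : Scheme G) : Equiv.Perm (G.Dart × Bool) :=
  Function.Involutive.toPerm (fun p => (p.1.symm, xor p.2 (σ.sgn p.1)))
    (by
      rintro ⟨d, s⟩
      simp [SimpleGraph.Dart.symm_symm, σ.sgn_symm, Bool.xor_assoc])

/-- Turning around a vertex: apply the rotation or its inverse, depending on the current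
local orientation. -/
def Scheme.step {G : SimpleGraph V} (σ : Scheme G) : Equiv.Perm (G.Dart × Bool) where
  toFun p := (cond p.2 (σ.rot p.1) (σ.rot.symm p.1), p.2)
  invFun p := (cond p.2 (σ.rot.symm p.1) (σ.rot p.1), p.2)
  left_inv := by rintro ⟨d, s⟩; cases s <;> simp
  right_inv := by rintro ⟨d, s⟩; cases s <;> simp

/-- The face-tracing permutation of an embedding scheme. -/
def Scheme.facePerm {G : SimpleGraph V} (σ : Scheme G) : Equiv.Perm (G.Dart × Bool) :=
  σ.step * σ.flip

/-- The number of cycles (orbits) of a permutation. -/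
noncomputable def cycleCount {α : Type*} (f : Equiv.Perm α) : ℕ :=
  Nat.card (Quotient (Setoid.mk f.SameCycle
    ⟨fun _ => Equiv.Perm.SameCycle.rfl, Equiv.Perm.SameCycle.symm, Equiv.Perm.SameCycle.trans⟩))

/-- The number of faces of an embedding scheme: each face is traced twice by `facePerm`. -/
noncomputable def Scheme.faceCount {G : SimpleGraph V} (σ : Scheme G) : ℕ :=
  cycleCount σ.facePerm / 2

/-- The Euler genus `2 - v + e - f` of (the surface of) an embedding scheme of a connected
graph. -/
noncomputable def Scheme.eulerGenus {G : SimpleGraph V} (σ : Scheme G) : ℤ :=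
  2 - (Nat.card V : ℤ) + ((Nat.card G.Dart / 2 : ℕ) : ℤ) - (σ.faceCount : ℤ)

/-- An embedding scheme is orientable iff its signature is switching-equivalent to the
all-positive signature. -/
def Scheme.Orientable {G : SimpleGraph V} (σ : Scheme G) : Prop :=
  ∃ f : V → Bool, ∀ d : G.Dart, σ.sgn d = xor (f d.toProd.1) (f d.toProd.2)

/-- `G` embeds in the sphere with `k` crosscaps: some connected supergraph of `G` (on the same
vertex set) has a cellular embedding scheme whose surface is the sphere with `k` crosscaps. -/
def EmbedsWithCrosscaps (G : SimpleGraph V) (k : ℕ) : Prop :=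
  ∃ H : SimpleGraph V, G ≤ H ∧ H.Preconnected ∧
    ∃ σ : Scheme H, σ.eulerGenus = (k : ℤ) ∧ (k = 0 ∨ ¬ σ.Orientable)

/-- `G` embeds in the sphere with `g` handles (an orientable surface of genus `g`). -/
def EmbedsWithHandles (G : SimpleGraph V) (g : ℕ) : Prop :=
  ∃ H : SimpleGraph V, G ≤ H ∧ H.Preconnected ∧
    ∃ σ : Scheme H, σ.eulerGenus = (2 * g : ℤ) ∧ σ.Orientable

/-- The nonorientable genus (crosscap number) of a finite graph: the least `k` such that `G`
embeds in the sphere with `k` crosscaps. -/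
noncomputable def crosscap (G : SimpleGraph V) : ℕ :=
  sInf {k : ℕ | EmbedsWithCrosscaps G k}

/-- The (orientable) genus of a finite graph. -/
noncomputable def genus (G : SimpleGraph V) : ℕ :=
  sInf {g : ℕ | EmbedsWithHandles G g}

/-- The nonorientable genus of an arbitrary (possibly infinite) graph: the supremum of the
nonorientable genera of its finite (induced) subgraphs. -/
noncomputable def crosscapE (G : SimpleGraph V) : ℕ∞ :=
  ⨆ s : Finset V, (crosscap (G.induce (s : Set V)) : ℕ∞)

end CrosscapDef

namespace CrosscapDef
/-- The generalized unit and unitary Cayley graph `Γ(R, G, S)`: vertices are the elements of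
`R`, and distinct `x`, `y` are adjacent iff `x + s*y` is a unit belonging to `G` for some
`s ∈ S`. -/
def gammaGraph (R : Type*) [CommRing R] (G : Subgroup Rˣ) (S : Set Rˣ)
    (hSG : S ⊆ (G : Set Rˣ)) (hS : S⁻¹ ⊆ S) : SimpleGraph R where
  Adj x y := x ≠ y ∧ ∃ s ∈ S, ∃ u ∈ G, (u : R) = x + (s : Rˣ) * y
  symm := ⟨by
    rintro x y ⟨hxy, s, hs, u, hu, h⟩
    refine ⟨hxy.symm, s⁻¹, hS (by simpa using hs), s⁻¹ * u,
      mul_mem (inv_mem (hSG hs)) hu, ?_⟩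
    have h1 : ((s⁻¹ : Rˣ) : R) * (s : R) = 1 := Units.inv_mul s
    calc ((s⁻¹ * u : Rˣ) : R) = ((s⁻¹ : Rˣ) : R) * ((u : Rˣ) : R) := Units.val_mul _ _
      _ = ((s⁻¹ : Rˣ) : R) * (x + (s : Rˣ) * y) := by rw [h]
      _ = y + ((s⁻¹ : Rˣ) : R) * x := by rw [mul_add, ← mul_assoc, h1]; ring⟩
  loopless := ⟨fun x h => h.1 rfl⟩

/-- The graph `Γ(R, S) = Γ(R, U(R), S)`. -/
def unitGammaGraph (R : Type*) [CommRing R] (S : Set Rˣ) (hS : S⁻¹ ⊆ S) : SimpleGraph R :=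
  gammaGraph R ⊤ S (fun x _ => by simp) hS

/-- The co-maximal graph of `R`: distinct `x`, `y` are adjacent iff `Rx + Ry = R`. -/
def comaximalGraph (R : Type*) [CommRing R] : SimpleGraph R where
  Adj x y := x ≠ y ∧ Ideal.span {x} ⊔ Ideal.span {y} = ⊤
  symm := ⟨by rintro x y ⟨h1, h2⟩; exact ⟨h1.symm, by rwa [sup_comm]⟩⟩
  loopless := ⟨fun x h => h.1 rfl⟩

end CrosscapDef

/-!
For `s ∈ S` and `x ∈ R`, the vertex `x` is adjacent to `s⁻¹(u - x)` for every unit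
`u ≠ (1 + s)x`, so every vertex of `Γ(R, S)` has degree at least `|U(R)| - 1`. Once all degrees
are at least 2, every face of an embedding has length at least 3, and Euler's formula for Euler
genus 1 allows at most `6|R| - 3` darts; hence `|U(R)| ≤ 6`.

The units `≡ 1 (mod J(R))` form a subgroup `K ≤ U(R)` containing `1 + J(R)`. If `K ≠ U(R)`,
then `|J(R)| ≤ |K| ≤ |U(R)| / 2 ≤ 3`. If `K = U(R)`, then `2 ∈ J(R)`, adjacent `x, y` satisfy
`x + y ≡ 1`, so `Γ(R, S)` is triangle-free, and `(1 + s)x ∈ J(R)` is never a unit, so all degrees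
are at least `|U(R)|`. A face of length 3 then contains a dart outside `Γ(R, S)`, and Euler's
formula allows at most `4|R| - 2` darts of `Γ(R, S)`, which forces `|U(R)| ≤ 3`.

If `S = ∅` the graph is edgeless, and an edgeless graph embeds in the sphere through a spanning
star, so its nonorientable genus is 0.
-/

open SimpleGraph
open scoped Finset

namespace CrosscapDef

section CycleCount

variable {α : Type*} (f : Equiv.Perm α)

lemma cycleCount_eq_natCard {β : Type*} (π : α → β) (hπ : Function.Surjective π)
    (h : ∀ x y, f.SameCycle x y ↔ π x = π y) : cycleCount f = Nat.card β :=
  (Nat.card_congr (Quotient.congrRight h)).trans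
    (Nat.card_congr (Setoid.quotientKerEquivOfSurjective π hπ))

lemma le_natCard_sameCycle [Finite α] {x : α} {k : ℕ}
    (h : ∀ i, 0 < i → i < k → (f ^ i) x ≠ x) : k ≤ Nat.card {y // f.SameCycle x y} := by
  have hlt : ∀ i j : ℕ, i < j → j < k → (f ^ i) x ≠ (f ^ j) x := by
    intro i j hij hjk hfij
    rw [← Nat.add_sub_cancel' hij.le, pow_add, Equiv.Perm.mul_apply,
      (f ^ i).injective.eq_iff] at hfij
    exact h (j - i) (by omega) (by omega) hfij.symm
  have hinj : Function.Injective
      (fun i : Fin k => (⟨(f ^ (i : ℕ)) x, ⟨i, by simp⟩⟩ : {y // f.SameCycle x y})) := by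
    intro i j hij
    rcases lt_trichotomy i j with hlt' | heq | hgt
    · exact absurd (congrArg Subtype.val hij) (hlt i j hlt' j.2)
    · exact heq
    · exact absurd (congrArg Subtype.val hij).symm (hlt j i hgt i.2)
  simpa using Nat.card_le_card_of_injective _ hinj

lemma mul_cycleCount_le [Finite α] (E : Set α) (n : ℕ)
    (h : ∀ x, n ≤ Nat.card {y // f.SameCycle x y} +
      Nat.card {y // f.SameCycle x y ∧ y ∈ E}) :
    n * cycleCount f ≤ Nat.card α + Nat.card E := by
  classical
  have := Fintype.ofFinite α
  let q := Quotient.mk (Equiv.Perm.SameCycle.setoid f)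
  have hfiber (s : Finset α) (x : α) :
      #{y ∈ s | q y = q x} = Nat.card {y // f.SameCycle x y ∧ y ∈ s} := by
    rw [Nat.card_eq_fintype_card, Fintype.card_subtype]
    congr 1
    ext y
    simp only [Finset.mem_filter, Finset.mem_univ, true_and, q, Quotient.eq]
    exact and_comm.trans (and_congr_left' Equiv.Perm.sameCycle_comm)
  have hsum (s : Finset α) : #s = ∑ b, #{y ∈ s | q y = b} :=
    Finset.card_eq_sum_card_fiberwise (by simp)
  rw [Nat.card_eq_card_toFinset E, Nat.card_eq_fintype_card, ← Finset.card_univ, hsum, hsum,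
    ← Finset.sum_add_distrib, cycleCount, Nat.card_eq_fintype_card, mul_comm, ← smul_eq_mul,
    ← Finset.card_univ]
  refine Finset.card_nsmul_le_sum _ _ _ fun b _ => ?_
  obtain ⟨x, rfl⟩ : ∃ x, q x = b := Quotient.mk_surjective b
  rw [hfiber, hfiber]
  simpa using h x

end CycleCount

lemma sameCycle_map_of_step {α β : Type*} [Finite α] {f : Equiv.Perm α}
    {g : Equiv.Perm β} (ι : α → β) (hstep : ∀ a, g.SameCycle (ι a) (ι (f a))) {a b : α}
    (hab : f.SameCycle a b) : g.SameCycle (ι a) (ι b) := by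
  obtain ⟨k, rfl⟩ := hab.exists_nat_pow_eq
  clear hab
  induction k with
  | zero => rfl
  | succ k ih => rw [pow_succ', Equiv.Perm.mul_apply]; exact ih.trans (hstep _)

instance {V : Type*} [Finite V] (G : SimpleGraph V) : Finite G.Dart :=
  Finite.of_injective _ Dart.toProd_injective

lemma card_dart_le_of_le {V : Type*} [Finite V] {G H : SimpleGraph V} (hGH : G ≤ H) :
    Nat.card G.Dart ≤ Nat.card H.Dart :=
  Nat.card_le_card_of_injective (fun d => ⟨d.toProd, hGH d.adj⟩)
    fun _ _ h => Dart.ext _ _ (congrArg (fun d : H.Dart => d.toProd) h)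

lemma mul_le_card_dart {V : Type*} [Finite V] (G : SimpleGraph V) {k : ℕ}
    (hdeg : ∀ v, k ≤ (G.neighborSet v).ncard) : Nat.card V * k ≤ Nat.card G.Dart := by
  have := Fintype.ofFinite V
  let e : G.Dart ≃ Σ v, G.neighborSet v :=
    { toFun d := ⟨d.fst, d.snd, d.adj⟩
      invFun p := ⟨(p.1, p.2), p.2.2⟩ }
  rw [Nat.card_congr e, Nat.card_sigma, Nat.card_eq_fintype_card (α := V), ← smul_eq_mul,
    ← Finset.card_univ]
  exact Finset.card_nsmul_le_sum _ _ _ fun v _ => hdeg v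

section Scheme

variable {V : Type*} {G H : SimpleGraph V} (σ : Scheme H)

lemma Scheme.facePerm_apply (p : H.Dart × Bool) :
    σ.facePerm p = (cond (xor p.2 (σ.sgn p.1)) (σ.rot p.1.symm) (σ.rot.symm p.1.symm),
      xor p.2 (σ.sgn p.1)) := rfl

lemma Scheme.fst_rot_symm (d : H.Dart) : (σ.rot.symm d).fst = d.fst := by
  simpa using (σ.rot_fst (σ.rot.symm d)).symm

lemma Scheme.fst_facePerm (p : H.Dart × Bool) : (σ.facePerm p).1.fst = p.1.snd := by
  rw [Scheme.facePerm_apply]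
  cases xor p.2 (σ.sgn p.1) <;> simp [σ.rot_fst, σ.fst_rot_symm]

lemma Scheme.facePerm_ne_self (p : H.Dart × Bool) : σ.facePerm p ≠ p := fun h =>
  p.1.adj.ne (by rw [← σ.fst_facePerm p, h])

lemma Scheme.eq_of_rot_eq_self {d e : H.Dart} (hd : σ.rot d = d) (he : e.fst = d.fst) :
    e = d := by
  obtain ⟨k, hk⟩ := σ.rot_single d e he.symm
  rw [← hk, Function.IsFixedPt.perm_zpow hd k]

lemma Scheme.rot_ne_self (hGH : G ≤ H) (hdeg : ∀ v, 1 < (G.neighborSet v).ncard)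
    (d : H.Dart) : σ.rot d ≠ d := by
  intro hd
  obtain ⟨w, hw, hwd⟩ := Set.exists_ne_of_one_lt_ncard (hdeg d.fst) d.snd
  have := σ.eq_of_rot_eq_self (e := ⟨(d.fst, w), hGH hw⟩) hd rfl
  exact hwd (congrArg (fun e : H.Dart => e.snd) this)

lemma Scheme.facePerm_facePerm_ne_self (hrot : ∀ d, σ.rot d ≠ d) (p : H.Dart × Bool) :
    σ.facePerm (σ.facePerm p) ≠ p := by
  -- A face of length 2 would run along `p.1` and back along `p.1.symm`, so the rotation would
  -- fix `p.1.symm`.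
  intro h
  have hsymm : (σ.facePerm p).1 = p.1.symm := by
    refine Dart.ext _ _ (Prod.ext (σ.fst_facePerm p) ?_)
    simpa [h] using (σ.fst_facePerm (σ.facePerm p)).symm
  change cond (xor p.2 (σ.sgn p.1)) (σ.rot p.1.symm) (σ.rot.symm p.1.symm) = p.1.symm at hsymm
  revert hsymm
  cases xor p.2 (σ.sgn p.1) <;> intro hsymm
  · exact hrot _ (σ.rot.symm_apply_eq.mp hsymm).symm
  · exact hrot _ hsymm

lemma Scheme.exists_not_adj_of_facePerm_pow_three (hG : G.CliqueFree 3) (p : H.Dart × Bool)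
    (hp : (σ.facePerm ^ 3) p = p) :
    ∃ i < 3, ¬ G.Adj ((σ.facePerm ^ i) p).1.fst ((σ.facePerm ^ i) p).1.snd := by
  classical
  by_contra! hadj
  have h0 := hadj 0 (by norm_num)
  have h1 := hadj 1 (by norm_num)
  have h2 := hadj 2 (by norm_num)
  simp only [pow_zero, pow_one, sq, Equiv.Perm.mul_apply, Equiv.Perm.one_apply] at h0 h1 h2
  have hp' : σ.facePerm (σ.facePerm (σ.facePerm p)) = p := by simpa [pow_succ] using hp
  have h3 := σ.fst_facePerm (σ.facePerm (σ.facePerm p))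
  rw [hp'] at h3
  rw [σ.fst_facePerm] at h1
  rw [σ.fst_facePerm, ← h3] at h2
  exact hG _ (is3Clique_triple_iff.mpr ⟨h0, h2.symm, h1⟩)

end Scheme

section EulerBound

variable {V : Type*} [Finite V] {G H : SimpleGraph V} (σ : Scheme H)

lemma Scheme.three_le_natCard_sameCycle (hrot : ∀ d, σ.rot d ≠ d) (p : H.Dart × Bool) :
    3 ≤ Nat.card {q // σ.facePerm.SameCycle p q} := by
  refine le_natCard_sameCycle _ fun i hi0 hi3 => ?_
  interval_cases i
  · simpa using σ.facePerm_ne_self p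
  · simpa [sq] using σ.facePerm_facePerm_ne_self hrot p

lemma Scheme.three_mul_cycleCount_le (hrot : ∀ d, σ.rot d ≠ d) :
    3 * cycleCount σ.facePerm ≤ 2 * Nat.card H.Dart := by
  have h := mul_cycleCount_le σ.facePerm ∅ 3 fun p =>
    (σ.three_le_natCard_sameCycle hrot p).trans (Nat.le_add_right _ _)
  simpa [Nat.card_prod, mul_comm] using h

lemma Scheme.four_le_natCard_sameCycle_add (hrot : ∀ d, σ.rot d ≠ d) (hG : G.CliqueFree 3)
    (p : H.Dart × Bool) :
    4 ≤ Nat.card {q // σ.facePerm.SameCycle p q} +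
      Nat.card {q // σ.facePerm.SameCycle p q ∧ ¬ G.Adj q.1.fst q.1.snd} := by
  by_cases h3 : (σ.facePerm ^ 3) p = p
  · obtain ⟨i, -, hi⟩ := σ.exists_not_adj_of_facePerm_pow_three hG p h3
    have : 0 < Nat.card {q // σ.facePerm.SameCycle p q ∧ ¬ G.Adj q.1.fst q.1.snd} :=
      Nat.card_pos_iff.2 ⟨⟨⟨(σ.facePerm ^ i) p, ⟨i, by simp⟩, hi⟩⟩, inferInstance⟩
    have := σ.three_le_natCard_sameCycle hrot p
    omega
  · have : 4 ≤ Nat.card {q // σ.facePerm.SameCycle p q} := by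
      refine le_natCard_sameCycle _ fun i hi0 hi4 => ?_
      interval_cases i
      · simpa using σ.facePerm_ne_self p
      · simpa [sq] using σ.facePerm_facePerm_ne_self hrot p
      · exact h3
    omega

lemma Scheme.four_mul_cycleCount_add_le (hrot : ∀ d, σ.rot d ≠ d) (hGH : G ≤ H)
    (hG : G.CliqueFree 3) :
    4 * cycleCount σ.facePerm + 2 * Nat.card G.Dart ≤ 4 * Nat.card H.Dart := by
  let E : Set (H.Dart × Bool) := {p | ¬ G.Adj p.1.fst p.1.snd}
  have hcc := mul_cycleCount_le _ E 4 (σ.four_le_natCard_sameCycle_add hrot hG)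
  have hGE : 2 * Nat.card G.Dart ≤ Nat.card ↥Eᶜ := by
    rw [mul_comm, ← Fintype.card_bool, ← Nat.card_eq_fintype_card, ← Nat.card_prod]
    refine Nat.card_le_card_of_injective
      (fun p => ⟨(⟨p.1.toProd, hGH p.1.adj⟩, p.2), not_not.mpr p.1.adj⟩) ?_
    rintro ⟨d, b⟩ ⟨d', b'⟩ h
    simp only [Subtype.mk.injEq, Prod.mk.injEq, Dart.mk.injEq] at h
    rw [Dart.ext _ _ h.1, h.2]
  have hE := Set.ncard_add_ncard_compl E
  rw [← Nat.card_coe_set_eq, ← Nat.card_coe_set_eq] at hE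
  rw [Nat.card_prod, Nat.card_eq_fintype_card (α := Bool), Fintype.card_bool] at hcc hE
  omega

lemma Scheme.card_dart_add_three_le (hrot : ∀ d, σ.rot d ≠ d) (hσ : σ.eulerGenus = 1) :
    Nat.card H.Dart + 3 ≤ 6 * Nat.card V := by
  have := σ.three_mul_cycleCount_le hrot
  rw [Scheme.eulerGenus, Scheme.faceCount] at hσ
  omega

lemma Scheme.card_dart_add_two_le (hrot : ∀ d, σ.rot d ≠ d) (hGH : G ≤ H)
    (hG : G.CliqueFree 3) (hσ : σ.eulerGenus = 1) :
    Nat.card G.Dart + 2 ≤ 4 * Nat.card V := by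
  have := σ.four_mul_cycleCount_add_le hrot hGH hG
  rw [Scheme.eulerGenus, Scheme.faceCount] at hσ
  omega

end EulerBound

section Star

variable {V : Type*} {c : V} {ρ : Equiv.Perm V}

lemma _root_.Equiv.Perm.IsCycleOn.apply_eq_self_of_compl_singleton (hρ : ρ.IsCycleOn {c}ᶜ) :
    ρ c = c :=
  not_not.mp fun h => hρ.apply_mem_iff.mp h rfl

lemma starGraph_adj_center_apply {τ : Equiv.Perm V} (hτ : τ c = c) (d : (starGraph c).Dart)
    (hd : d.fst = c) : (starGraph c).Adj c (τ d.snd) :=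
  starGraph_center_adj fun h => d.adj.ne (hd.trans (τ.injective (hτ.trans h)))

variable [DecidableEq V]

variable (c) in
def starRotFun (τ : Equiv.Perm V) (hτ : τ c = c) (d : (starGraph c).Dart) :
    (starGraph c).Dart :=
  if hd : d.fst = c then ⟨(c, τ d.snd), starGraph_adj_center_apply hτ d hd⟩ else d

lemma starRotFun_starRotFun {τ τ' : Equiv.Perm V} (hτ : τ c = c) (hτ' : τ' c = c)
    (h : ∀ x, τ' (τ x) = x) (d : (starGraph c).Dart) :
    starRotFun c τ' hτ' (starRotFun c τ hτ d) = d := by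
  by_cases hd : d.fst = c
  · ext <;> simp [starRotFun, hd, h]
  · simp [starRotFun, hd]

def starRot (hρ : ρ.IsCycleOn {c}ᶜ) : Equiv.Perm (starGraph c).Dart where
  toFun := starRotFun c ρ hρ.apply_eq_self_of_compl_singleton
  invFun := starRotFun c ρ⁻¹ (ρ.symm_apply_eq.mpr hρ.apply_eq_self_of_compl_singleton.symm)
  left_inv := starRotFun_starRotFun _ _ (by simp)
  right_inv := starRotFun_starRotFun _ _ (by simp)

variable (c) in
def centerDart (l : {x // x ≠ c}) : (starGraph c).Dart :=
  ⟨(c, l), starGraph_center_adj (Ne.symm l.2)⟩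

lemma exists_centerDart_or_symm (d : (starGraph c).Dart) :
    ∃ l, d = centerDart c l ∨ d = (centerDart c l).symm := by
  by_cases hd : d.fst = c
  · refine ⟨⟨d.snd, fun h => d.adj.ne (hd.trans h.symm)⟩, .inl ?_⟩
    ext <;> simp [centerDart, hd]
  · have hsnd : d.snd = c := (starGraph_adj.mp d.adj).2.resolve_left hd
    exact ⟨⟨d.fst, hd⟩, .inr (by ext <;> simp [centerDart, hsnd])⟩

variable (hρ : ρ.IsCycleOn {c}ᶜ)

def leafPerm : Equiv.Perm {x // x ≠ c} :=
  ρ.subtypePerm fun _ => hρ.apply_mem_iff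

lemma starRot_centerDart (l : {x // x ≠ c}) :
    starRot hρ (centerDart c l) = centerDart c (leafPerm hρ l) :=
  dif_pos rfl

lemma starRot_symm_centerDart (l : {x // x ≠ c}) :
    (starRot hρ).symm (centerDart c l) = centerDart c ((leafPerm hρ)⁻¹ l) :=
  dif_pos rfl

lemma starRot_centerDart_symm (l : {x // x ≠ c}) :
    starRot hρ (centerDart c l).symm = (centerDart c l).symm :=
  dif_neg l.2

lemma starRot_symm_centerDart_symm (l : {x // x ≠ c}) :
    (starRot hρ).symm (centerDart c l).symm = (centerDart c l).symm :=
  dif_neg l.2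

lemma sameCycle_starRot_centerDart [Finite V] (l l' : {x // x ≠ c}) :
    (starRot hρ).SameCycle (centerDart c l) (centerDart c l') :=
  sameCycle_map_of_step (f := leafPerm hρ) (centerDart c)
    (fun l => ⟨1, by rw [zpow_one, starRot_centerDart]⟩)
    (Equiv.Perm.sameCycle_subtypePerm.mpr (hρ.2 l.2 l'.2))

def starScheme [Finite V] : Scheme (starGraph c) where
  rot := starRot hρ
  rot_fst d := by
    obtain ⟨l, rfl | rfl⟩ := exists_centerDart_or_symm d
    · rw [starRot_centerDart]; rfl
    · rw [starRot_centerDart_symm]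
  rot_single d e hde := by
    obtain ⟨l, rfl | rfl⟩ := exists_centerDart_or_symm d <;>
      obtain ⟨l', rfl | rfl⟩ := exists_centerDart_or_symm e
    · exact sameCycle_starRot_centerDart hρ l l'
    · exact absurd hde.symm l'.2
    · exact absurd hde l.2
    · obtain rfl : l = l' := Subtype.ext hde
      rfl
  sgn _ := false
  sgn_symm _ := rfl

variable [Finite V]

lemma starScheme_facePerm_centerDart (l : {x // x ≠ c}) (s : Bool) :
    (starScheme hρ).facePerm (centerDart c l, s) = ((centerDart c l).symm, s) := by
  cases s <;> simp [Scheme.facePerm_apply, starScheme, starRot_centerDart_symm,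
    starRot_symm_centerDart_symm]

lemma starScheme_facePerm_centerDart_symm (l : {x // x ≠ c}) (s : Bool) :
    (starScheme hρ).facePerm ((centerDart c l).symm, s)
      = (centerDart c (cond s (leafPerm hρ) (leafPerm hρ)⁻¹ l), s) := by
  cases s <;> simp [Scheme.facePerm_apply, starScheme, starRot_centerDart,
    starRot_symm_centerDart]

lemma sameCycle_starScheme_facePerm_iff (p q : (starGraph c).Dart × Bool) :
    (starScheme hρ).facePerm.SameCycle p q ↔ p.2 = q.2 := by
  constructor
  · intro h
    refine Equiv.Perm.sameCycle_one.mp (sameCycle_map_of_step (g := 1) Prod.snd (fun p => ?_) h)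
    simp [Scheme.facePerm_apply, starScheme]
  · have hcenter : ∀ l l' s, (starScheme hρ).facePerm.SameCycle (centerDart c l, s)
        (centerDart c l', s) := by
      intro l l' s
      have hl : (cond s (leafPerm hρ) (leafPerm hρ)⁻¹).SameCycle l l' := by
        have h : (leafPerm hρ).SameCycle l l' :=
          Equiv.Perm.sameCycle_subtypePerm.mpr (hρ.2 l.2 l'.2)
        cases s
        exacts [h.inv, h]
      refine sameCycle_map_of_step (fun l => (centerDart c l, s)) (fun l => ⟨2, ?_⟩) hl
      rw [zpow_two, Equiv.Perm.mul_apply, starScheme_facePerm_centerDart,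
        starScheme_facePerm_centerDart_symm]
    have hreach : ∀ p : (starGraph c).Dart × Bool,
        ∃ l, (starScheme hρ).facePerm.SameCycle (centerDart c l, p.2) p := by
      rintro ⟨d, s⟩
      obtain ⟨l, rfl | rfl⟩ := exists_centerDart_or_symm d
      · exact ⟨l, .rfl⟩
      · exact ⟨l, ⟨1, by rw [zpow_one, starScheme_facePerm_centerDart]⟩⟩
    intro hpq
    obtain ⟨l, hl⟩ := hreach p
    obtain ⟨l', hl'⟩ := hreach q
    rw [hpq] at hl
    exact hl.symm.trans ((hcenter l l' q.2).trans hl')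

lemma cycleCount_starScheme_facePerm {x : V} (hx : x ≠ c) :
    cycleCount (starScheme hρ).facePerm = 2 := by
  rw [cycleCount_eq_natCard _ Prod.snd (fun s => ⟨(centerDart c ⟨x, hx⟩, s), rfl⟩)
    (sameCycle_starScheme_facePerm_iff hρ)]
  simp

lemma eulerGenus_starScheme {x : V} (hx : x ≠ c) : (starScheme hρ).eulerGenus = 0 := by
  have := Fintype.ofFinite V
  have hD : Nat.card (starGraph c).Dart + 2 = 2 * Nat.card V := by
    rw [Nat.card_eq_fintype_card, dart_card_eq_twice_card_edges, Nat.card_eq_fintype_card,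
      ← (isTree_starGraph c).card_edgeFinset]
    ring
  rw [Scheme.eulerGenus, Scheme.faceCount, cycleCount_starScheme_facePerm hρ hx]
  omega

end Star

lemma embedsWithCrosscaps_bot_zero {V : Type*} [Finite V] [Nontrivial V] :
    EmbedsWithCrosscaps (⊥ : SimpleGraph V) 0 := by
  classical
  have := Fintype.ofFinite V
  obtain ⟨x, c, hxc⟩ := exists_pair_ne V
  obtain ⟨ρ, hρ, -⟩ := Finset.exists_cycleOn ({c}ᶜ : Finset V)
  rw [Finset.coe_compl, Finset.coe_singleton] at hρ
  exact ⟨starGraph c, bot_le, (connected_starGraph c).preconnected, starScheme hρ,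
    eulerGenus_starScheme hρ hxc, .inl rfl⟩

lemma crosscap_bot {V : Type*} [Finite V] [Nontrivial V] : crosscap (⊥ : SimpleGraph V) = 0 :=
  Nat.sInf_eq_zero.mpr (.inl embedsWithCrosscaps_bot_zero)

section UnitGamma

variable {R : Type*} [CommRing R] {S : Set Rˣ} {hS : S⁻¹ ⊆ S}

lemma unitGammaGraph_adj_iff {x y : R} :
    (unitGammaGraph R S hS).Adj x y ↔ x ≠ y ∧ ∃ s ∈ S, IsUnit (x + s * y) := by
  simp [unitGammaGraph, gammaGraph, IsUnit]

lemma unitGammaGraph_empty (hS : (∅ : Set Rˣ)⁻¹ ⊆ ∅) : unitGammaGraph R ∅ hS = ⊥ := by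
  ext x y
  simp [unitGammaGraph_adj_iff]

lemma unitGammaGraph_adj_inv_mul_sub {s : Rˣ} (hs : s ∈ S) {x : R} {u : Rˣ}
    (hu : (u : R) ≠ (1 + s) * x) : (unitGammaGraph R S hS).Adj x (↑s⁻¹ * (u - x)) := by
  refine unitGammaGraph_adj_iff.mpr ⟨fun h => hu ?_, s, hs, ?_⟩
  · calc (u : R) = s * (↑s⁻¹ * (u - x)) + x := by simp
      _ = (1 + s) * x := by rw [← h]; ring
  · simp

lemma inv_mul_sub_injective (s : Rˣ) (x : R) :
    Function.Injective fun u : Rˣ => (↑s⁻¹ * (u - x) : R) := by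
  intro u v h
  ext
  simpa using h

variable [Finite R]

lemma card_units_le_ncard_neighborSet_add_one {s : Rˣ} (hs : s ∈ S) (x : R) :
    Nat.card Rˣ ≤ ((unitGammaGraph R S hS).neighborSet x).ncard + 1 := by
  have hmaps (u : Rˣ) :
      (↑s⁻¹ * (u - x) : R) ∈ insert x ((unitGammaGraph R S hS).neighborSet x) := by
    by_cases hu : (u : R) = (1 + s) * x
    · left
      rw [hu]
      simp [add_mul]
    · exact .inr (unitGammaGraph_adj_inv_mul_sub (hS := hS) hs hu)
  calc Nat.card Rˣ ≤ (insert x ((unitGammaGraph R S hS).neighborSet x)).ncard :=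
        Nat.card_le_card_of_injective (fun u => ⟨_, hmaps u⟩)
          fun _ _ h => inv_mul_sub_injective s x (congrArg Subtype.val h)
    _ ≤ _ := Set.ncard_insert_le _ _

lemma card_units_le_ncard_neighborSet {s : Rˣ} (hs : s ∈ S) {x : R}
    (hx : ∀ u : Rˣ, (u : R) ≠ (1 + s) * x) :
    Nat.card Rˣ ≤ ((unitGammaGraph R S hS).neighborSet x).ncard :=
  Nat.card_le_card_of_injective
    (fun u => ⟨_, unitGammaGraph_adj_inv_mul_sub (hS := hS) hs (hx u)⟩)
    fun _ _ h => inv_mul_sub_injective s x (congrArg Subtype.val h)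

end UnitGamma

section UnitsCongrOne

variable {R : Type*} [CommRing R] {S : Set Rˣ} {hS : S⁻¹ ⊆ S} {I : Ideal R}

lemma mem_ker_unitsMap_mk_iff {u : Rˣ} :
    u ∈ (Units.map (Ideal.Quotient.mk I : R →* R ⧸ I)).ker ↔ (u : R) - 1 ∈ I := by
  rw [MonoidHom.mem_ker, Units.ext_iff, Units.coe_map, Units.val_one,
    ← map_one (Ideal.Quotient.mk I)]
  exact Ideal.Quotient.eq

lemma card_jacobson_le_card_ker_unitsMap_mk [Finite R] :
    Nat.card (⊥ : Ideal R).jacobson ≤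
      Nat.card (Units.map (Ideal.Quotient.mk (⊥ : Ideal R).jacobson :
        R →* R ⧸ (⊥ : Ideal R).jacobson)).ker := by
  have hunit (j : (⊥ : Ideal R).jacobson) : IsUnit (1 + (j : R)) :=
    Ideal.isUnit_of_sub_one_mem_jacobson_bot _ (by simp)
  refine Nat.card_le_card_of_injective
    (fun j => ⟨(hunit j).unit, mem_ker_unitsMap_mk_iff.mpr (by simp)⟩) ?_
  intro j j' h
  have := congrArg (fun u : Rˣ => (u : R)) (congrArg Subtype.val h)
  simpa using this

variable (hI : ∀ u : Rˣ, (u : R) - 1 ∈ I)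
include hI

lemma two_mem_of_forall_units_sub_one_mem : (2 : R) ∈ I := by
  simpa [← sub_eq_add_neg, show (-1 - 1 : R) = -2 by ring] using hI (-1)

lemma add_sub_one_mem_of_unitGammaGraph_adj {x y : R} (h : (unitGammaGraph R S hS).Adj x y) :
    x + y - 1 ∈ I := by
  obtain ⟨-, s, -, u, hu⟩ := unitGammaGraph_adj_iff.mp h
  have : x + y - 1 = (u - 1) - (s - 1) * y := by rw [hu]; ring
  rw [this]
  exact I.sub_mem (hI u) (I.mul_mem_right _ (hI s))

lemma cliqueFree_three_unitGammaGraph (hI1 : I ≠ ⊤) : (unitGammaGraph R S hS).CliqueFree 3 := by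
  classical
  intro t ht
  obtain ⟨a, b, c, hab, hac, hbc, -⟩ := is3Clique_iff.mp ht
  have h2 := two_mem_of_forall_units_sub_one_mem hI
  have hsum := I.add_mem (I.add_mem (add_sub_one_mem_of_unitGammaGraph_adj hI hab)
    (add_sub_one_mem_of_unitGammaGraph_adj hI hac))
    (add_sub_one_mem_of_unitGammaGraph_adj hI hbc)
  refine hI1 ((Ideal.eq_top_iff_one I).mpr ?_)
  have : (1 : R) = 2 * (a + b + c) - 2 - ((a + b - 1) + (a + c - 1) + (b + c - 1)) := by ring
  rw [this]
  exact I.sub_mem (I.sub_mem (I.mul_mem_right _ h2) h2) hsum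

lemma card_units_le_ncard_neighborSet_of_forall_units_sub_one_mem [Finite R] (hI1 : I ≠ ⊤)
    {s : Rˣ} (hs : s ∈ S) (x : R) :
    Nat.card Rˣ ≤ ((unitGammaGraph R S hS).neighborSet x).ncard := by
  refine card_units_le_ncard_neighborSet hs fun u hu => hI1 (I.eq_top_of_isUnit_mem ?_ u.isUnit)
  have : (1 + s : R) = 2 + (s - 1) := by ring
  rw [hu, this]
  exact I.mul_mem_right _ (I.add_mem (two_mem_of_forall_units_sub_one_mem hI) (hI s))

end UnitsCongrOne

section CrosscapOne

variable {R : Type*} [CommRing R] [Finite R] {S : Set Rˣ} {hS : S⁻¹ ⊆ S} {s : Rˣ}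
  {H : SimpleGraph R}

lemma card_units_le_six (hs : s ∈ S) (hGH : unitGammaGraph R S hS ≤ H) (σ : Scheme H)
    (hσ : σ.eulerGenus = 1) : Nat.card Rˣ ≤ 6 := by
  by_contra! hM
  have hdeg (x : R) : 6 ≤ ((unitGammaGraph R S hS).neighborSet x).ncard := by
    have := card_units_le_ncard_neighborSet_add_one (hS := hS) hs x
    omega
  have hrot := σ.rot_ne_self hGH fun v => by have := hdeg v; omega
  have := mul_le_card_dart _ hdeg
  have := card_dart_le_of_le hGH
  have := σ.card_dart_add_three_le hrot hσ
  omega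

lemma card_units_le_three {I : Ideal R} (hI : ∀ u : Rˣ, (u : R) - 1 ∈ I) (hI1 : I ≠ ⊤)
    (hs : s ∈ S) (hGH : unitGammaGraph R S hS ≤ H) (σ : Scheme H) (hσ : σ.eulerGenus = 1) :
    Nat.card Rˣ ≤ 3 := by
  by_contra! hM
  have hdeg := card_units_le_ncard_neighborSet_of_forall_units_sub_one_mem (hS := hS) hI hI1 hs
  have hrot := σ.rot_ne_self hGH fun v => by have := hdeg v; omega
  have := mul_le_card_dart _ hdeg
  have := σ.card_dart_add_two_le hrot hGH (cliqueFree_three_unitGammaGraph hI hI1) hσ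
  have : Nat.card R * 4 ≤ Nat.card R * Nat.card Rˣ := Nat.mul_le_mul_left _ hM
  omega

lemma card_jacobson_le_three [Nontrivial R] (hs : s ∈ S) (hGH : unitGammaGraph R S hS ≤ H)
    (σ : Scheme H) (hσ : σ.eulerGenus = 1) (hM : Nat.card Rˣ ≤ 6) :
    Nat.card (⊥ : Ideal R).jacobson ≤ 3 := by
  set K := (Units.map (Ideal.Quotient.mk (⊥ : Ideal R).jacobson :
    R →* R ⧸ (⊥ : Ideal R).jacobson)).ker
  calc Nat.card (⊥ : Ideal R).jacobson ≤ Nat.card K := card_jacobson_le_card_ker_unitsMap_mk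
    _ ≤ 3 := ?_
  by_cases hK : K = ⊤
  · rw [hK, Subgroup.card_top]
    have hJ (u : Rˣ) : (u : R) - 1 ∈ (⊥ : Ideal R).jacobson :=
      mem_ker_unitsMap_mk_iff.mp ((Subgroup.eq_top_iff' K).mp hK u)
    exact card_units_le_three hJ (Ideal.jacobson_eq_top_iff.not.mpr bot_ne_top) hs hGH σ hσ
  · have := K.card_mul_index
    have := K.one_lt_index_of_ne_top hK
    nlinarith

end CrosscapOne

end CrosscapDef

open CrosscapDef in
/-- If `R` is a finite commutative ring with `γ̃(Γ(R, S)) = 1`, then `|U(R)| ≤ 6` and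
`|J(R)| ≤ 3`. -/
theorem card_units_le_of_crosscap_eq_one {R : Type*} [CommRing R] [Finite R] (S : Set Rˣ)
    (hS : S⁻¹ ⊆ S) (h : crosscap (unitGammaGraph R S hS) = 1) :
    Nat.card Rˣ ≤ 6 ∧ Nat.card ((⊥ : Ideal R).jacobson) ≤ 3 := by
  rcases subsingleton_or_nontrivial R with hR | hR
  · have hcard : Nat.card R = 1 := Nat.card_unique
    exact ⟨(Nat.card_le_card_of_injective _ Units.val_injective).trans (by omega),
      (Nat.card_le_card_of_injective _ Subtype.val_injective).trans (by omega)⟩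
  obtain ⟨s, hs⟩ : S.Nonempty := by
    rw [Set.nonempty_iff_ne_empty]
    rintro rfl
    rw [unitGammaGraph_empty, crosscap_bot] at h
    exact zero_ne_one h
  obtain ⟨H, hGH, -, σ, hσ, -⟩ : EmbedsWithCrosscaps (unitGammaGraph R S hS) 1 :=
    h ▸ Nat.sInf_mem (Nat.nonempty_of_pos_sInf (h ▸ one_pos))
  have hM := card_units_le_six hs hGH σ hσ
  exact ⟨hM, card_jacobson_le_three hs hGH σ hσ hM⟩
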